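/- For every k ≥ 2, Σ_{k+1}^∞LLPO ≤ᶜ_W Σ_k^∞LLPO but Σ_k^∞LLPO ≰ᶜ_W Σ_{k+1}^∞LLPO; i.e., Σ_{k+1}^∞LLPO is strictly below Σ_k^∞LLPO in the continuous Weihrauch order. -/

import Mathlib

namespace Weihrauch

/-- Baire space ℕ^ℕ. -/
abbrev Baire : Type := ℕ → ℕ

/-- The interleaving pairing homeomorphism ⟨p,q⟩. -/
def pair (p q : Baire) : Baire := fun n => if n % 2 = 0 then p (n / 2) else q (n / 2)

/-- First component of the interleaving pairing. -/
def left (z : Baire) : Baire := fun n => z (2 * n)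

/-- Second component of the interleaving pairing. -/
def right (z : Baire) : Baire := fun n => z (2 * n + 1)

/-- The sequence np = n,p(0),p(1),… . -/
def cons (n : ℕ) (p : Baire) : Baire := fun m => match m with
  | 0 => n
  | k + 1 => p k

/-- Drop the first entry of a sequence. -/
def tail (z : Baire) : Baire := fun n => z (n + 1)

/-- The constant zero sequence 0^ℕ. -/
def zero : Baire := fun _ => 0

/-- The constant one sequence 1^ℕ. -/
def one : Baire := fun _ => 1

/-- Partial multivalued functions on Baire space. -/
abbrev MV : Type := Baire → Set Baire

/-- The domain of a partial multivalued function. -/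
def dom (P : MV) : Set Baire := {x | (P x).Nonempty}

/-- Continuous Weihrauch reducibility P ≤ᶜ_W Q. -/
def CWle (P Q : MV) : Prop :=
  ∃ H K : Baire → Baire,
    ContinuousOn K (dom P) ∧
    (∀ x ∈ dom P, K x ∈ dom Q) ∧
    ContinuousOn H {z | ∃ x ∈ dom P, ∃ y ∈ Q (K x), z = pair x y} ∧
    (∀ x ∈ dom P, ∀ y ∈ Q (K x), H (pair x y) ∈ P x)

/-- Continuous Weihrauch equivalence P ≡ᶜ_W Q. -/
def CWequiv (P Q : MV) : Prop := CWle P Q ∧ CWle Q P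

/-- The infimum operation (P ⊕ Q)(⟨p,q⟩) = 0P(p) ∪ 1Q(q) for p ∈ dom P, q ∈ dom Q. -/
def oplus (P Q : MV) : MV := fun z =>
  {r | left z ∈ dom P ∧ right z ∈ dom Q ∧
       ((∃ s ∈ P (left z), r = cons 0 s) ∨ (∃ s ∈ Q (right z), r = cons 1 s))}

/-- The coproduct (P ∐ Q)(0p) = 0P(p), (P ∐ Q)(1p) = 1Q(p). -/
def coprod (P Q : MV) : MV := fun z =>
  {r | (z 0 = 0 ∧ ∃ s ∈ P (tail z), r = cons 0 s) ∨
       (z 0 = 1 ∧ ∃ s ∈ Q (tail z), r = cons 1 s)}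

/-- The product (P × Q)(⟨p,q⟩) = {⟨r,s⟩ | r ∈ P(p), s ∈ Q(q)}. -/
def prod (P Q : MV) : MV := fun z =>
  {r | ∃ s ∈ P (left z), ∃ t ∈ Q (right z), r = pair s t}

/-- A fixed finite tupling ⟨p₀,…,p_{n-1}⟩ of n sequences, by interleaving. -/
def ftup (n : ℕ) (f : ℕ → Baire) : Baire := fun m => f (m % n) (m / n)

/-- The i-th projection inverting `ftup n`: `fproj n i (ftup n f) = f i` for i < n. -/
def fproj (n i : ℕ) (z : Baire) : Baire := fun j => z (j * n + i)

/-- The finite parallelization P*, with P*(n⟨p₁,…,pₙ⟩) = {n⟨r₁,…,rₙ⟩ | rᵢ ∈ P(pᵢ)}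
for n ≥ 1 and P*(0p) = {0^ℕ}.  (Note every sequence is of the form `ftup n f`,
since `ftup n (fun i => fproj n i z) = z`.) -/
def fpar (P : MV) : MV := fun z =>
  {r | (z 0 = 0 ∧ r = zero) ∨
       (1 ≤ z 0 ∧ r 0 = z 0 ∧
        ∀ i < z 0, fproj (z 0) i (tail r) ∈ P (fproj (z 0) i (tail z)))}

/-- Countable tupling ⟨p₁,p₂,…⟩ via the pairing bijection ℕ×ℕ→ℕ
(the family is indexed by 0,1,2,…). -/
def ctup (f : ℕ → Baire) : Baire := fun m => f (Nat.unpair m).1 (Nat.unpair m).2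

/-- Projection inverting `ctup`: `cproj i (ctup f) = f i`. -/
def cproj (i : ℕ) (z : Baire) : Baire := fun j => z (Nat.pair i j)

/-- The 1-indexed component pᵢ of a countable tuple z = ⟨p₁,p₂,…⟩ (for i ≥ 1). -/
def comp (z : Baire) (i : ℕ) : Baire := cproj (i - 1) z

/-- LLPO_{n,1}: at most one pair (i,j) with pᵢ(j) ≠ 0 in the domain;
values are the i0^ℕ with 1 ≤ i ≤ n and pᵢ = 0^ℕ. -/
def LLPOn (n : ℕ) : MV := fun z =>
  {r | (∀ i j i' j', 1 ≤ i → 1 ≤ i' → comp z i j ≠ 0 → comp z i' j' ≠ 0 →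
          (i = i' ∧ j = j')) ∧
       ∃ i, 1 ≤ i ∧ i ≤ n ∧ comp z i = zero ∧ r = cons i zero}

/-- LLPO_{∞,m}: at most m pairs (i,j) with pᵢ(j) ≠ 0 in the domain;
values are the i0^ℕ with pᵢ = 0^ℕ. -/
def LLPOinf (m : ℕ) : MV := fun z =>
  {r | (∃ s : Finset (ℕ × ℕ), s.card ≤ m ∧ ∀ i j, 1 ≤ i → comp z i j ≠ 0 → (i, j) ∈ s) ∧
       ∃ i, 1 ≤ i ∧ comp z i = zero ∧ r = cons i zero}

/-- The sequence 0ⁿ10^ℕ. -/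
def zeros1 (n : ℕ) : Baire := fun m => if m = n then 1 else 0

/-- Σ_k^∞LLPO(⟨0^ℕ,p⟩) = LLPO_{∞,2}(p), Σ_k^∞LLPO(⟨0ⁿ10^ℕ,p⟩) = LLPO_{n,1}(p) for n ≥ k. -/
def SigmaLLPO (k : ℕ) : MV := fun z =>
  {r | (left z = zero ∧ r ∈ LLPOinf 2 (right z)) ∨
       (∃ n, k ≤ n ∧ left z = zeros1 n ∧ r ∈ LLPOn n (right z))}

/-- c_𝒜, with dom(c_𝒜) = {0^ℕ} and c_𝒜(0^ℕ) = 𝒜. -/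
def cA (A : Set Baire) : MV := fun z => {r | z = zero ∧ r ∈ A}

/-- d_𝒜, with dom(d_𝒜) = 𝒜 and d_𝒜(x) = {1^ℕ} for x ∈ 𝒜. -/
def dA (A : Set Baire) : MV := fun z => {r | z ∈ A ∧ r = one}

/-- Continuous Medvedev reducibility 𝒜 ≤ᶜ_M 𝒝. -/
def CMle (A B : Set Baire) : Prop :=
  ∃ H : Baire → Baire, ContinuousOn H B ∧ ∀ x ∈ B, H x ∈ A

/-- The Medvedev sum 𝒜 + 𝒝 = 0𝒜 ∪ 1𝒝. -/
def msum (A B : Set Baire) : Set Baire := (cons 0 '' A) ∪ (cons 1 '' B)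

/-- The Medvedev product 𝒜 × 𝒝 = {⟨p,q⟩ | p ∈ 𝒜, q ∈ 𝒝}. -/
def mprod (A B : Set Baire) : Set Baire := {z | ∃ p ∈ A, ∃ q ∈ B, z = pair p q}

end Weihrauch

namespace Weihrauch

lemma left_pair (p q : Baire) : left (pair p q) = p := by
  funext n; simp [left, pair, Nat.mul_div_cancel_left, Nat.mul_mod_right]

lemma right_pair (p q : Baire) : right (pair p q) = q := by
  funext n; simp [right, pair, Nat.mul_add_mod, Nat.mul_add_div]

lemma comp_zero' (i : ℕ) : comp zero i = zero := rfl

lemma zeros1_ne_zero (n : ℕ) : zeros1 n ≠ zero := by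
  intro h
  have := congrFun h n
  simp [zeros1, zero] at this

lemma zeros1_inj {n m : ℕ} (h : zeros1 n = zeros1 m) : n = m := by
  have := congrFun h n
  simp [zeros1] at this
  by_contra hne
  exact hne this

lemma cont_prefix {f : Baire → Baire} {S : Set Baire} {p : Baire}
    (h : ContinuousWithinAt f S p) (M : ℕ) :
    ∃ N, ∀ q ∈ S, (∀ m < N, q m = p m) → ∀ m < M, f q m = f p m := by
  set U : Set Baire := (↑(Finset.range M) : Set ℕ).pi (fun m => {f p m}) with hUdef
  have hU : IsOpen U := isOpen_set_pi (Finset.finite_toSet _) (fun a _ => isOpen_discrete _)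
  have hmem : f p ∈ U := fun m _ => rfl
  have hpre : f ⁻¹' U ∈ nhdsWithin p S := h (hU.mem_nhds hmem)
  rw [mem_nhdsWithin] at hpre
  obtain ⟨O, hO, hpO, hsub⟩ := hpre
  obtain ⟨I, u, hu, hIsub⟩ := isOpen_pi_iff.mp hO p hpO
  refine ⟨(I.sup id) + 1, fun q hq hagree m hm => ?_⟩
  have hqO : q ∈ O := by
    apply hIsub
    intro a ha
    have : q a = p a := hagree a (Nat.lt_succ_of_le (Finset.le_sup (f := id) ha))
    rw [this]; exact (hu a ha).2
  have : f q ∈ U := hsub ⟨hqO, hq⟩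
  exact this m (by simpa using hm)

lemma mem_SigmaLLPO_of_left_zeros1 {k n : ℕ} (hkn : k ≤ n) {z : Baire}
    (hz : left z = zeros1 n) (r : Baire) :
    r ∈ SigmaLLPO k z ↔ r ∈ LLPOn n (right z) := by
  constructor
  · rintro (⟨h0, _⟩ | ⟨m, hm, hlm, hr⟩)
    · exact absurd (hz ▸ h0) (zeros1_ne_zero n)
    · have : m = n := zeros1_inj (hlm ▸ hz : zeros1 m = zeros1 n)
      exact this ▸ hr
  · intro h
    exact Or.inr ⟨n, hkn, hz, h⟩

lemma mem_SigmaLLPO_of_left_zero {k : ℕ} {z : Baire} (hz : left z = zero) (r : Baire) :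
    r ∈ SigmaLLPO k z ↔ r ∈ LLPOinf 2 (right z) := by
  constructor
  · rintro (⟨_, h⟩ | ⟨m, _, hlm, _⟩)
    · exact h
    · exact absurd (hlm ▸ hz : zeros1 m = zero) (zeros1_ne_zero m)
  · intro h
    exact Or.inl ⟨hz, h⟩

/-- At most one bad index, given the LLPOn domain condition. -/
lemma good_of_one {w : Baire}
    (hd : ∀ i j i' j', 1 ≤ i → 1 ≤ i' → comp w i j ≠ 0 → comp w i' j' ≠ 0 → i = i' ∧ j = j')
    {a b : ℕ} (ha : 1 ≤ a) (hb : 1 ≤ b) (hab : a ≠ b) :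
    comp w a = zero ∨ comp w b = zero := by
  by_contra h
  push_neg at h
  obtain ⟨h1, h2⟩ := h
  obtain ⟨ja, hja⟩ := Function.ne_iff.mp h1
  obtain ⟨jb, hjb⟩ := Function.ne_iff.mp h2
  exact hab (hd a ja b jb ha hb hja hjb).1

/-- At most two bad indices, given the LLPOinf 2 domain condition. -/
lemma good_of_two {w : Baire}
    (hd : ∃ s : Finset (ℕ × ℕ), s.card ≤ 2 ∧ ∀ i j, 1 ≤ i → comp w i j ≠ 0 → (i, j) ∈ s)
    {a b c : ℕ} (ha : 1 ≤ a) (hb : 1 ≤ b) (hc : 1 ≤ c)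
    (hab : a ≠ b) (hac : a ≠ c) (hbc : b ≠ c) :
    comp w a = zero ∨ comp w b = zero ∨ comp w c = zero := by
  by_contra h
  push_neg at h
  obtain ⟨h1, h2, h3⟩ := h
  obtain ⟨ja, hja⟩ := Function.ne_iff.mp h1
  obtain ⟨jb, hjb⟩ := Function.ne_iff.mp h2
  obtain ⟨jc, hjc⟩ := Function.ne_iff.mp h3
  obtain ⟨s, hcard, hcov⟩ := hd
  have hma : (a, ja) ∈ s := hcov a ja ha hja
  have hmb : (b, jb) ∈ s := hcov b jb hb hjb
  have hmc : (c, jc) ∈ s := hcov c jc hc hjc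
  have hsub : ({(a, ja), (b, jb), (c, jc)} : Finset (ℕ × ℕ)) ⊆ s := by
    intro x hx
    simp at hx
    rcases hx with h | h | h <;> subst h <;> assumption
  have h3le : 3 ≤ s.card := by
    refine le_trans (le_of_eq ?_) (Finset.card_le_card hsub)
    rw [Finset.card_insert_of_notMem, Finset.card_insert_of_notMem, Finset.card_singleton]
    · simp [hbc]
    · simp [hab, hac]
  omega

/-- The perturbed tuple: everything zero except component i at position pos. -/
def pert (i pos : ℕ) : Baire := fun m => if m = Nat.pair (i - 1) pos then 1 else 0

lemma comp_pert_ne {i i' : ℕ} (h1 : 1 ≤ i) (h1' : 1 ≤ i') (hne : i' ≠ i) (pos : ℕ) :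
    comp (pert i pos) i' = zero := by
  funext j
  show (if Nat.pair (i' - 1) j = Nat.pair (i - 1) pos then 1 else 0) = 0
  rw [if_neg]
  intro h
  rw [Nat.pair_eq_pair] at h
  omega

lemma comp_pert_self (i pos : ℕ) : comp (pert i pos) i pos = 1 := by
  show (if Nat.pair (i - 1) pos = Nat.pair (i - 1) pos then 1 else 0) = 1
  rw [if_pos rfl]

lemma pert_domcond (i pos : ℕ) (hi : 1 ≤ i) :
    ∀ a b a' b', 1 ≤ a → 1 ≤ a' → comp (pert i pos) a b ≠ 0 → comp (pert i pos) a' b' ≠ 0 →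
      a = a' ∧ b = b' := by
  intro a b a' b' ha ha' h h'
  have h2 : Nat.pair (a - 1) b = Nat.pair (i - 1) pos := by
    by_contra hc
    exact h (by show (if Nat.pair (a-1) b = Nat.pair (i-1) pos then 1 else 0) = 0; rw [if_neg hc])
  have h2' : Nat.pair (a' - 1) b' = Nat.pair (i - 1) pos := by
    by_contra hc
    exact h' (by show (if Nat.pair (a'-1) b' = Nat.pair (i-1) pos then 1 else 0) = 0; rw [if_neg hc])
  rw [Nat.pair_eq_pair] at h2 h2'
  omega

lemma pair_agree_left {x x' y : Baire} {N : ℕ} (h : ∀ m < N, x' m = x m) :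
    ∀ m < N, pair x' y m = pair x y m := by
  intro m hm
  show (if m % 2 = 0 then x' (m/2) else y (m/2)) = (if m % 2 = 0 then x (m/2) else y (m/2))
  by_cases hp : m % 2 = 0
  · rw [if_pos hp, if_pos hp, h _ (lt_of_le_of_lt (Nat.div_le_self m 2) hm)]
  · rw [if_neg hp, if_neg hp]

lemma pert_agree {k i pos N : ℕ} (hN : N ≤ pos) :
    ∀ m < N, pair (zeros1 k) (pert i pos) m = pair (zeros1 k) zero m := by
  intro m hm
  show (if m % 2 = 0 then _ else pert i pos (m/2)) = (if m % 2 = 0 then _ else zero (m/2))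
  by_cases hp : m % 2 = 0
  · rw [if_pos hp, if_pos hp]
  · rw [if_neg hp, if_neg hp]
    show (if m / 2 = Nat.pair (i - 1) pos then 1 else 0) = 0
    rw [if_neg]
    have h1 : m / 2 < N := lt_of_le_of_lt (Nat.div_le_self m 2) hm
    have h2 : pos ≤ Nat.pair (i - 1) pos := Nat.right_le_pair _ _
    omega

end Weihrauch

open Weihrauch

/-- Σ_{k+1}^∞LLPO is strictly below Σ_k^∞LLPO in the continuous Weihrauch order,
for every k ≥ 2. -/
theorem SigmaLLPO_strictly_decreasing (k : ℕ) (hk : 2 ≤ k) :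
    CWle (SigmaLLPO (k + 1)) (SigmaLLPO k) ∧
    ¬ CWle (SigmaLLPO k) (SigmaLLPO (k + 1)) := by
  constructor
  · -- easy direction
    refine ⟨fun z => right z, id, continuous_id.continuousOn, ?_, ?_, ?_⟩
    · rintro x ⟨r, hr⟩
      refine ⟨r, ?_⟩
      rcases hr with h | ⟨n, hn, h1, h2⟩
      · exact Or.inl h
      · exact Or.inr ⟨n, by omega, h1, h2⟩
    · exact (continuous_pi fun n => continuous_apply (2 * n + 1)).continuousOn
    · rintro x ⟨r, hr⟩ y hy
      show right (pair x y) ∈ SigmaLLPO (k + 1) x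
      rw [right_pair]
      rcases hy with h | ⟨n, hn, hln, hy⟩
      · exact Or.inl h
      · refine Or.inr ⟨n, ?_, hln, hy⟩
        rcases hr with ⟨h0, -⟩ | ⟨n', hn', hln', -⟩
        · exact absurd (hln.symm.trans h0) (zeros1_ne_zero n)
        · have : n' = n := zeros1_inj (hln'.symm.trans hln)
          omega
  · -- hard direction
    rintro ⟨H, K, hKc, hKdom, hHc, hHP⟩
    classical
    set x₀ : Baire := pair (zeros1 k) zero with hx₀def
    have hx₀l : left x₀ = zeros1 k := left_pair _ _
    have hx₀r : right x₀ = zero := right_pair _ _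
    have hx₀P : ∀ r : Baire, r ∈ SigmaLLPO k x₀ ↔ r ∈ LLPOn k (right x₀) :=
      mem_SigmaLLPO_of_left_zeros1 le_rfl hx₀l
    have hx₀dom : x₀ ∈ dom (SigmaLLPO k) := by
      refine ⟨cons 1 zero, (hx₀P _).mpr ?_⟩
      rw [hx₀r]
      exact ⟨fun i j i' j' _ _ h _ => absurd rfl h, 1, le_rfl, by omega, rfl, rfl⟩
    -- the color of a potential oracle answer j
    have hφ : ∀ j : ℕ, cons j zero ∈ SigmaLLPO (k + 1) (K x₀) →
        1 ≤ H (pair x₀ (cons j zero)) 0 ∧ H (pair x₀ (cons j zero)) 0 ≤ k ∧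
        H (pair x₀ (cons j zero)) = cons (H (pair x₀ (cons j zero)) 0) zero := by
      intro j hj
      have hmem := hHP x₀ hx₀dom (cons j zero) hj
      rw [hx₀P, hx₀r] at hmem
      obtain ⟨-, i, h1, h2, -, hr⟩ := hmem
      have h0 : H (pair x₀ (cons j zero)) 0 = i := by rw [hr]; rfl
      rw [h0, hr]
      exact ⟨h1, h2, rfl⟩
    -- perturbed instances are in the domain
    have hpertdom : ∀ i pos : ℕ, 1 ≤ i →
        pair (zeros1 k) (pert i pos) ∈ dom (SigmaLLPO k) := by
      intro i pos hi
      refine ⟨cons (if i = 1 then 2 else 1) zero,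
        (mem_SigmaLLPO_of_left_zeros1 le_rfl (left_pair _ _) _).mpr ?_⟩
      rw [right_pair]
      exact ⟨pert_domcond i pos hi, if i = 1 then 2 else 1, by split <;> omega,
        by split <;> omega, comp_pert_ne hi (by split <;> omega) (by split <;> omega) pos, rfl⟩
    -- the final contradiction
    have hfinal : ∀ i pos j : ℕ, 1 ≤ i → 1 ≤ j →
        cons j zero ∈ SigmaLLPO (k + 1) (K (pair (zeros1 k) (pert i pos))) →
        H (pair (pair (zeros1 k) (pert i pos)) (cons j zero)) 0 = i → False := by
      intro i pos j hi h1j hsol hH0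
      have hmem := hHP _ (hpertdom i pos hi) (cons j zero) hsol
      rw [mem_SigmaLLPO_of_left_zeros1 le_rfl (left_pair _ _), right_pair] at hmem
      obtain ⟨-, i', h1, h2, hcz, hr⟩ := hmem
      rw [hr] at hH0
      have hii : i' = i := hH0
      subst hii
      have hco := congrFun hcz pos
      rw [comp_pert_self] at hco
      exact one_ne_zero hco
    -- continuity of H at the base solutions
    have hNH : ∀ j : ℕ, cons j zero ∈ SigmaLLPO (k + 1) (K x₀) →
        ∃ N, ∀ x' ∈ dom (SigmaLLPO k), cons j zero ∈ SigmaLLPO (k + 1) (K x') →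
          (∀ m < N, x' m = x₀ m) →
          H (pair x' (cons j zero)) 0 = H (pair x₀ (cons j zero)) 0 := by
      intro j hj
      obtain ⟨N, hN⟩ := cont_prefix (hHc _ ⟨x₀, hx₀dom, cons j zero, hj, rfl⟩) 1
      exact ⟨N, fun x' hx' hsol hag =>
        hN (pair x' (cons j zero)) ⟨x', hx', cons j zero, hsol, rfl⟩
          (pair_agree_left hag) 0 one_pos⟩
    obtain ⟨r₀, hr₀⟩ := hKdom x₀ hx₀dom
    rcases hr₀ with ⟨hl₀, hinf₀⟩ | ⟨m, hm, hl₀, hfin₀⟩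
    · -- Case B : K x₀ is an LLPO_{∞,2} instance
      obtain ⟨hcov₀, -⟩ := hinf₀
      have hsol₀ : ∀ j : ℕ, 1 ≤ j → comp (right (K x₀)) j = zero →
          cons j zero ∈ SigmaLLPO (k + 1) (K x₀) :=
        fun j h1 h2 => (mem_SigmaLLPO_of_left_zero hl₀ _).mpr ⟨hcov₀, j, h1, h2, rfl⟩
      have hbadcard :
          ((Finset.Icc 1 (2 * k + 3)).filter
            (fun j => ¬ comp (right (K x₀)) j = zero)).card ≤ 2 := by
        obtain ⟨s, hs2, hscov⟩ := hcov₀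
        have hsub : (Finset.Icc 1 (2 * k + 3)).filter
            (fun j => ¬ comp (right (K x₀)) j = zero) ⊆ s.image Prod.fst := by
          intro j hj
          rw [Finset.mem_filter] at hj
          obtain ⟨hjI, hjne⟩ := hj
          obtain ⟨b, hb⟩ := Function.ne_iff.mp hjne
          exact Finset.mem_image.mpr ⟨(j, b), hscov j b (Finset.mem_Icc.mp hjI).1 hb, rfl⟩
        exact le_trans (le_trans (Finset.card_le_card hsub) Finset.card_image_le) hs2
      have hgoodcard : 2 * k + 1 ≤
          ((Finset.Icc 1 (2 * k + 3)).filter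
            (fun j => comp (right (K x₀)) j = zero)).card := by
        have h := Finset.card_filter_add_card_filter_not
          (s := Finset.Icc 1 (2 * k + 3)) (fun j => comp (right (K x₀)) j = zero)
        rw [Nat.card_Icc] at h
        omega
      have hmaps : ∀ j ∈ (Finset.Icc 1 (2 * k + 3)).filter
          (fun j => comp (right (K x₀)) j = zero),
          H (pair x₀ (cons j zero)) 0 ∈ Finset.Icc 1 k := by
        intro j hj
        rw [Finset.mem_filter] at hj
        obtain ⟨h1, h2, -⟩ := hφ j (hsol₀ j (Finset.mem_Icc.mp hj.1).1 hj.2)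
        exact Finset.mem_Icc.mpr ⟨h1, h2⟩
      obtain ⟨i, hiIcc, hfib⟩ := Finset.exists_lt_card_fiber_of_mul_lt_card_of_maps_to (n := 2) hmaps
        (by rw [Nat.card_Icc]; omega)
      obtain ⟨j₁, hj₁, j₂, hj₂, j₃, hj₃, h12, h13, h23⟩ := Finset.two_lt_card.mp hfib
      simp only [Finset.mem_filter, Finset.mem_Icc] at hj₁ hj₂ hj₃
      obtain ⟨⟨⟨h1j₁, h2j₁⟩, hz₁⟩, hc₁⟩ := hj₁
      obtain ⟨⟨⟨h1j₂, h2j₂⟩, hz₂⟩, hc₂⟩ := hj₂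
      obtain ⟨⟨⟨h1j₃, h2j₃⟩, hz₃⟩, hc₃⟩ := hj₃
      obtain ⟨N₁, hN₁⟩ := hNH j₁ (hsol₀ j₁ h1j₁ hz₁)
      obtain ⟨N₂, hN₂⟩ := hNH j₂ (hsol₀ j₂ h1j₂ hz₂)
      obtain ⟨N₃, hN₃⟩ := hNH j₃ (hsol₀ j₃ h1j₃ hz₃)
      obtain ⟨NK, hNK⟩ := cont_prefix (hKc x₀ hx₀dom) (2 * (2 * k + 4))
      set pos := N₁ + N₂ + N₃ + NK with hposdef
      have hi1 : 1 ≤ i := (Finset.mem_Icc.mp hiIcc).1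
      set x' : Baire := pair (zeros1 k) (pert i pos) with hx'def
      have hx'dom := hpertdom i pos hi1
      have hagmax : ∀ m' < pos, x' m' = x₀ m' := pert_agree le_rfl
      have hKag : ∀ m' < 2 * (2 * k + 4), K x' m' = K x₀ m' :=
        hNK x' hx'dom (fun m' hm' => hagmax m' (by omega))
      obtain ⟨r', hr'⟩ := hKdom x' hx'dom
      have hdone : ∀ j N, 1 ≤ j → H (pair x₀ (cons j zero)) 0 = i → N ≤ pos →
          (∀ x'' ∈ dom (SigmaLLPO k), cons j zero ∈ SigmaLLPO (k + 1) (K x'') →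
            (∀ m' < N, x'' m' = x₀ m') →
            H (pair x'' (cons j zero)) 0 = H (pair x₀ (cons j zero)) 0) →
          cons j zero ∈ SigmaLLPO (k + 1) (K x') → False := by
        intro j N h1 hphi hNpos hmod hsolx'
        refine hfinal i pos j hi1 h1 hsolx' ?_
        rw [hmod x' hx'dom hsolx' (fun m' hm' => hagmax m' (by omega))]
        exact hphi
      rcases hr' with ⟨hl', hinf'⟩ | ⟨n, hn, hl', hfin'⟩
      · obtain ⟨hcov', -⟩ := hinf'
        have hmemQ : ∀ j, 1 ≤ j → comp (right (K x')) j = zero →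
            cons j zero ∈ SigmaLLPO (k + 1) (K x') :=
          fun j h1 h2 => (mem_SigmaLLPO_of_left_zero hl' _).mpr ⟨hcov', j, h1, h2, rfl⟩
        rcases good_of_two hcov' h1j₁ h1j₂ h1j₃ h12 h13 h23 with hg | hg | hg
        · exact hdone j₁ N₁ h1j₁ hc₁ (by omega) hN₁ (hmemQ j₁ h1j₁ hg)
        · exact hdone j₂ N₂ h1j₂ hc₂ (by omega) hN₂ (hmemQ j₂ h1j₂ hg)
        · exact hdone j₃ N₃ h1j₃ hc₃ (by omega) hN₃ (hmemQ j₃ h1j₃ hg)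
      · -- the finite component must have very large index
        have hnge : 2 * k + 4 ≤ n := by
          by_contra hlt
          have h1 : left (K x') n = left (K x₀) n := hKag (2 * n) (by omega)
          rw [hl', hl₀] at h1
          have h2 : zeros1 n n = 1 := by simp [zeros1]
          have h3 : zero n = 0 := rfl
          rw [h2, h3] at h1
          exact one_ne_zero h1
        obtain ⟨hd', -⟩ := hfin'
        have hmemQ : ∀ j, 1 ≤ j → j ≤ 2 * k + 3 → comp (right (K x')) j = zero →
            cons j zero ∈ SigmaLLPO (k + 1) (K x') :=
          fun j h1 hle h2 => (mem_SigmaLLPO_of_left_zeros1 hn hl' _).mpr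
            ⟨hd', j, h1, by omega, h2, rfl⟩
        rcases good_of_one hd' h1j₁ h1j₂ h12 with hg | hg
        · exact hdone j₁ N₁ h1j₁ hc₁ (by omega) hN₁ (hmemQ j₁ h1j₁ h2j₁ hg)
        · exact hdone j₂ N₂ h1j₂ hc₂ (by omega) hN₂ (hmemQ j₂ h1j₂ h2j₂ hg)
    · -- Case A : K x₀ is an LLPO_{m,1} instance, m ≥ k + 1
      obtain ⟨hd₀, -⟩ := hfin₀
      have hsol₀ : ∀ j : ℕ, 1 ≤ j → j ≤ m → comp (right (K x₀)) j = zero →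
          cons j zero ∈ SigmaLLPO (k + 1) (K x₀) :=
        fun j h1 h2 h3 =>
          (mem_SigmaLLPO_of_left_zeros1 hm hl₀ _).mpr ⟨hd₀, j, h1, h2, h3, rfl⟩
      by_cases hbad : ∀ a, 1 ≤ a → comp (right (K x₀)) a = zero
      · -- no spent pair : pigeonhole two indices of the same color
        have hmaps : ∀ j ∈ Finset.Icc 1 m,
            H (pair x₀ (cons j zero)) 0 ∈ Finset.Icc 1 k := by
          intro j hj
          rw [Finset.mem_Icc] at hj
          obtain ⟨h1, h2, -⟩ := hφ j (hsol₀ j hj.1 hj.2 (hbad j hj.1))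
          exact Finset.mem_Icc.mpr ⟨h1, h2⟩
        obtain ⟨j₁, hj₁, j₂, hj₂, h12, hceq⟩ :=
          Finset.exists_ne_map_eq_of_card_lt_of_maps_to
            (by rw [Nat.card_Icc, Nat.card_Icc]; omega) hmaps
        rw [Finset.mem_Icc] at hj₁ hj₂
        obtain ⟨h1j₁, h2j₁⟩ := hj₁
        obtain ⟨h1j₂, h2j₂⟩ := hj₂
        obtain ⟨N₁, hN₁⟩ := hNH j₁ (hsol₀ j₁ h1j₁ h2j₁ (hbad j₁ h1j₁))
        obtain ⟨N₂, hN₂⟩ := hNH j₂ (hsol₀ j₂ h1j₂ h2j₂ (hbad j₂ h1j₂))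
        obtain ⟨NK, hNK⟩ := cont_prefix (hKc x₀ hx₀dom) (2 * m + 1)
        set i := H (pair x₀ (cons j₁ zero)) 0 with hidef
        have hi1 : 1 ≤ i := (hφ j₁ (hsol₀ j₁ h1j₁ h2j₁ (hbad j₁ h1j₁))).1
        set pos := N₁ + N₂ + NK with hposdef
        set x' : Baire := pair (zeros1 k) (pert i pos) with hx'def
        have hx'dom := hpertdom i pos hi1
        have hagmax : ∀ m' < pos, x' m' = x₀ m' := pert_agree le_rfl
        have hKag : ∀ m' < 2 * m + 1, K x' m' = K x₀ m' :=
          hNK x' hx'dom (fun m' hm' => hagmax m' (by omega))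
        obtain ⟨r', hr'⟩ := hKdom x' hx'dom
        have hlm : left (K x') m = 1 := by
          have h1 : left (K x') m = left (K x₀) m := hKag (2 * m) (by omega)
          rw [h1, hl₀]
          simp [zeros1]
        have hstruct : (∀ i' j' i'' j'', 1 ≤ i' → 1 ≤ i'' →
            comp (right (K x')) i' j' ≠ 0 → comp (right (K x')) i'' j'' ≠ 0 →
            i' = i'' ∧ j' = j'') ∧ left (K x') = zeros1 m := by
          rcases hr' with ⟨hl', -⟩ | ⟨n, hn, hl', hfin'⟩
          · rw [hl'] at hlm
            exact absurd hlm.symm one_ne_zero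
          · have hnm : n = m := by
              by_contra hne
              rw [hl'] at hlm
              have : zeros1 n m = 0 := by
                show (if m = n then 1 else 0) = 0
                rw [if_neg (fun h => hne h.symm)]
              rw [this] at hlm
              exact one_ne_zero hlm.symm
            rw [hnm] at hl'
            exact ⟨hfin'.1, hl'⟩
        obtain ⟨hd', hl'⟩ := hstruct
        have hmemQ : ∀ j, 1 ≤ j → j ≤ m → comp (right (K x')) j = zero →
            cons j zero ∈ SigmaLLPO (k + 1) (K x') :=
          fun j h1 h2 h3 =>
            (mem_SigmaLLPO_of_left_zeros1 hm hl' _).mpr ⟨hd', j, h1, h2, h3, rfl⟩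
        have hdone : ∀ j N, 1 ≤ j → H (pair x₀ (cons j zero)) 0 = i → N ≤ pos →
            (∀ x'' ∈ dom (SigmaLLPO k), cons j zero ∈ SigmaLLPO (k + 1) (K x'') →
              (∀ m' < N, x'' m' = x₀ m') →
              H (pair x'' (cons j zero)) 0 = H (pair x₀ (cons j zero)) 0) →
            cons j zero ∈ SigmaLLPO (k + 1) (K x') → False := by
          intro j N h1 hphi hNpos hmod hsolx'
          refine hfinal i pos j hi1 h1 hsolx' ?_
          rw [hmod x' hx'dom hsolx' (fun m' hm' => hagmax m' (by omega))]
          exact hphi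
        rcases good_of_one hd' h1j₁ h1j₂ h12 with hg | hg
        · exact hdone j₁ N₁ h1j₁ rfl (by omega) hN₁ (hmemQ j₁ h1j₁ h2j₁ hg)
        · exact hdone j₂ N₂ h1j₂ hceq.symm (by omega) hN₂ (hmemQ j₂ h1j₂ h2j₂ hg)
      · -- a spent pair : it is inherited, so K x' has no fresh nonzero component
        push_neg at hbad
        obtain ⟨a, ha1, hane⟩ := hbad
        obtain ⟨b, hb⟩ := Function.ne_iff.mp hane
        set j := if a = 1 then 2 else 1 with hjdef
        have h1j : 1 ≤ j := by rw [hjdef]; split <;> omega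
        have hjm : j ≤ m := by rw [hjdef]; split <;> omega
        have hja : j ≠ a := by rw [hjdef]; split <;> omega
        have hjz : comp (right (K x₀)) j = zero := by
          rcases good_of_one hd₀ h1j ha1 hja with hg | hg
          · exact hg
          · exact absurd hg hane
        have hsolj := hsol₀ j h1j hjm hjz
        obtain ⟨N₁, hN₁⟩ := hNH j hsolj
        obtain ⟨NK, hNK⟩ := cont_prefix (hKc x₀ hx₀dom)
          (2 * m + 2 * Nat.pair (a - 1) b + 2)
        set i := H (pair x₀ (cons j zero)) 0 with hidef
        have hi1 : 1 ≤ i := (hφ j hsolj).1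
        set pos := N₁ + NK with hposdef
        set x' : Baire := pair (zeros1 k) (pert i pos) with hx'def
        have hx'dom := hpertdom i pos hi1
        have hagmax : ∀ m' < pos, x' m' = x₀ m' := pert_agree le_rfl
        have hKag : ∀ m' < 2 * m + 2 * Nat.pair (a - 1) b + 2, K x' m' = K x₀ m' :=
          hNK x' hx'dom (fun m' hm' => hagmax m' (by omega))
        obtain ⟨r', hr'⟩ := hKdom x' hx'dom
        have hlm : left (K x') m = 1 := by
          have h1 : left (K x') m = left (K x₀) m := hKag (2 * m) (by omega)
          rw [h1, hl₀]
          simp [zeros1]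
        have hstruct : (∀ i' j' i'' j'', 1 ≤ i' → 1 ≤ i'' →
            comp (right (K x')) i' j' ≠ 0 → comp (right (K x')) i'' j'' ≠ 0 →
            i' = i'' ∧ j' = j'') ∧ left (K x') = zeros1 m := by
          rcases hr' with ⟨hl', -⟩ | ⟨n, hn, hl', hfin'⟩
          · rw [hl'] at hlm
            exact absurd hlm.symm one_ne_zero
          · have hnm : n = m := by
              by_contra hne
              rw [hl'] at hlm
              have : zeros1 n m = 0 := by
                show (if m = n then 1 else 0) = 0
                rw [if_neg (fun h => hne h.symm)]
              rw [this] at hlm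
              exact one_ne_zero hlm.symm
            rw [hnm] at hl'
            exact ⟨hfin'.1, hl'⟩
        obtain ⟨hd', hl'⟩ := hstruct
        have hinherit : comp (right (K x')) a b ≠ 0 := by
          have h1 : comp (right (K x')) a b = comp (right (K x₀)) a b :=
            hKag (2 * Nat.pair (a - 1) b + 1) (by omega)
          rw [h1]
          exact hb
        have hjz' : comp (right (K x')) j = zero := by
          funext b'
          by_contra hb'
          exact hja (hd' j b' a b h1j ha1 hb' hinherit).1
        have hsolx' : cons j zero ∈ SigmaLLPO (k + 1) (K x') :=
          (mem_SigmaLLPO_of_left_zeros1 hm hl' _).mpr ⟨hd', j, h1j, hjm, hjz', rfl⟩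
        refine hfinal i pos j hi1 h1j hsolx' ?_
        rw [hN₁ x' hx'dom hsolx' (fun m' hm' => hagmax m' (by omega))]
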